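/- Let n ≥ 2, N = n(n−1)/2, and let K̂ ∈ 𝒮_c have unit Frobenius norm. Fix ρ ∈ (0,1) and let T_c = H·T_{i;jk}·H for a triplet mask T_{i;jk}, with Δ_K̂ := ⟨T_c, K̂⟩_F > 0. Suppose L̂ = ρ·K̂ + E, where E is a zero-mean Gaussian random element of the (N−1)-dimensional subspace {K̂}^⊥ ∩ 𝒮_c with covariance σ²·Id on that subspace, where σ² = (1−ρ²)/(N−1). Then P[⟨T_c, L̂⟩_F > 0] ≥ Φ( ρ·Δ_K̂ / √( (12/(N−1))·(1−ρ) ) ). -/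

import Mathlib

open MeasureTheory ProbabilityTheory Matrix

noncomputable section

/-- Frobenius inner product of real matrices: `⟨A, B⟩_F = tr(Aᵀ B)`. -/
def finner {m k : Type*} [Fintype m] [Fintype k] (A B : Matrix m k ℝ) : ℝ :=
  (Aᵀ * B).trace

/-- Frobenius norm. -/
def fnorm {m k : Type*} [Fintype m] [Fintype k] (A : Matrix m k ℝ) : ℝ :=
  Real.sqrt (finner A A)

/-- `M` lies in `𝒮_c`: it is symmetric and `M 𝟙 = 0`. -/
def centeredSym {n : ℕ} (M : Matrix (Fin n) (Fin n) ℝ) : Prop :=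
  M.IsSymm ∧ M *ᵥ (fun _ => (1 : ℝ)) = 0

/-- Standard normal CDF `Φ`. -/
def Phi (x : ℝ) : ℝ := ((gaussianReal 0 1) (Set.Iic x)).toReal

/-- `E` is a zero-mean Gaussian random element supported on the subspace of matrices described by
the membership predicate `W`, with covariance `σ2 • Id` on that subspace: `E` takes values in `W`
and every linear functional `⟨T, ·⟩_F` with `T ∈ W` has the centered Gaussian law of variance
`σ2 * ‖T‖_F²`. -/
def IsIsoGaussianOn {n : ℕ} {Ω : Type*} [MeasurableSpace Ω] (P : Measure Ω)
    (E : Ω → Matrix (Fin n) (Fin n) ℝ) (W : Matrix (Fin n) (Fin n) ℝ → Prop) (σ2 : ℝ) : Prop :=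
  (∀ ω, W (E ω)) ∧
  ∀ T : Matrix (Fin n) (Fin n) ℝ, W T →
    Measure.map (fun ω => finner T (E ω)) P
      = gaussianReal 0 (Real.toNNReal (σ2 * (fnorm T) ^ 2))

/-- The centering matrix `H = I − (1/n) 𝟙 𝟙ᵀ`. -/
def Hmat (n : ℕ) : Matrix (Fin n) (Fin n) ℝ :=
  1 - ((n : ℝ)⁻¹) • Matrix.of (fun _ _ => (1 : ℝ))

/-- The squared-Euclidean triplet mask `T_{i;jk}`. -/
def tripletMask {n : ℕ} (i j k : Fin n) : Matrix (Fin n) (Fin n) ℝ :=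
  Matrix.of fun a b =>
    if a = j ∧ b = j then 1
    else if a = k ∧ b = k then -1
    else if (a = i ∧ b = j) ∨ (a = j ∧ b = i) then -1
    else if (a = i ∧ b = k) ∨ (a = k ∧ b = i) then 1
    else 0

/-- The cosine triplet mask `T^cos_{i;jk}`. -/
def cosMask {n : ℕ} (i j k : Fin n) : Matrix (Fin n) (Fin n) ℝ :=
  Matrix.of fun a b =>
    if (a = i ∧ b = j) ∨ (a = j ∧ b = i) then 1 / 2
    else if (a = i ∧ b = k) ∨ (a = k ∧ b = i) then -(1 / 2)
    else 0

/-!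
Split `T_c = Δ K̂ + T_⊥` with `T_⊥` centred and orthogonal to `K̂`; then
`⟨T_c, L̂⟩ = ρ Δ + ⟨T_⊥, E⟩`, and `⟨T_⊥, E⟩` is centred Gaussian with variance `σ² ‖T_⊥‖²`.
Since `H` is an orthogonal projection, `‖T_⊥‖² ≤ ‖T_c‖² ≤ ‖T_{i;jk}‖² ≤ 6`, and
`6 (1 - ρ²) ≤ 12 (1 - ρ)`, so the standard deviation is at most `√(12 (1 - ρ) / (N - 1))`.
-/

section Frobenius

variable {m k : Type*} [Fintype m] [Fintype k]

lemma finner_eq_sum (A B : Matrix m k ℝ) : finner A B = ∑ a, ∑ b, A a b * B a b := by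
  rw [finner, trace, Finset.sum_comm]
  simp [mul_apply]

lemma finner_comm (A B : Matrix m k ℝ) : finner A B = finner B A := by
  simp only [finner_eq_sum, mul_comm]

lemma finner_add_right (A B C : Matrix m k ℝ) : finner A (B + C) = finner A B + finner A C := by
  simp only [finner_eq_sum, Matrix.add_apply, mul_add, Finset.sum_add_distrib]

lemma finner_sub_right (A B C : Matrix m k ℝ) : finner A (B - C) = finner A B - finner A C := by
  simp only [finner_eq_sum, Matrix.sub_apply, mul_sub, Finset.sum_sub_distrib]

lemma finner_smul_right (c : ℝ) (A B : Matrix m k ℝ) : finner A (c • B) = c * finner A B := by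
  simp only [finner_eq_sum, Matrix.smul_apply, smul_eq_mul, Finset.mul_sum, mul_left_comm]

lemma finner_sub_left (A B C : Matrix m k ℝ) : finner (A - B) C = finner A C - finner B C := by
  rw [finner_comm, finner_sub_right, finner_comm C, finner_comm C]

lemma finner_smul_left (c : ℝ) (A B : Matrix m k ℝ) : finner (c • A) B = c * finner A B := by
  rw [finner_comm, finner_smul_right, finner_comm B]

lemma finner_self_nonneg (A : Matrix m k ℝ) : 0 ≤ finner A A := by
  rw [finner_eq_sum]
  exact Finset.sum_nonneg fun a _ => Finset.sum_nonneg fun b _ => mul_self_nonneg _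

lemma fnorm_sq (A : Matrix m k ℝ) : fnorm A ^ 2 = finner A A :=
  Real.sq_sqrt (finner_self_nonneg A)

lemma finner_sub_proj_self_le {K : Matrix m k ℝ} (hK : finner K K = 1) (A : Matrix m k ℝ) :
    finner (A - finner A K • K) (A - finner A K • K) ≤ finner A A := by
  simp only [finner_sub_left, finner_sub_right, finner_smul_left, finner_smul_right, hK,
    finner_comm K A]
  nlinarith [sq_nonneg (finner A K)]

lemma finner_sub_proj_eq_zero {K : Matrix m k ℝ} (hK : finner K K = 1) (A : Matrix m k ℝ) :
    finner K (A - finner A K • K) = 0 := by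
  rw [finner_sub_right, finner_smul_right, hK, finner_comm, mul_one, sub_self]

end Frobenius

lemma finner_conj_self_le {m : Type*} [Fintype m] {Q : Matrix m m ℝ}
    (hQt : Qᵀ = Q) (hQQ : Q * Q = Q) (A : Matrix m m ℝ) :
    finner (Q * A * Q) (Q * A * Q) ≤ finner A A := by
  have hcross : finner (Q * A * Q) (Q * A * Q) = finner A (Q * A * Q) := by
    simp only [finner, transpose_mul, hQt]
    calc (Q * (Aᵀ * Q) * (Q * A * Q)).trace = (Q * (Aᵀ * (Q * A * Q))).trace := by
          simp only [Matrix.mul_assoc, ← Matrix.mul_assoc Q Q, hQQ]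
      _ = (Aᵀ * (Q * A * Q)).trace := by
          rw [trace_mul_comm]
          simp only [Matrix.mul_assoc, hQQ]
  have h := finner_self_nonneg (A - Q * A * Q)
  rw [finner_sub_left, finner_sub_right, finner_sub_right, finner_comm (Q * A * Q) A] at h
  linarith

lemma centeredSym.sub {n : ℕ} {A B : Matrix (Fin n) (Fin n) ℝ} (hA : centeredSym A)
    (hB : centeredSym B) : centeredSym (A - B) :=
  ⟨hA.1.sub hB.1, by rw [sub_mulVec, hA.2, hB.2, sub_zero]⟩

lemma centeredSym.smul {n : ℕ} {A : Matrix (Fin n) (Fin n) ℝ} (hA : centeredSym A) (c : ℝ) :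
    centeredSym (c • A) :=
  ⟨hA.1.smul c, by rw [smul_mulVec, hA.2, smul_zero]⟩

lemma Hmat_transpose (n : ℕ) : (Hmat n)ᵀ = Hmat n := by
  ext a b
  simp [Hmat, one_apply, eq_comm]

lemma Hmat_mul_self (n : ℕ) : Hmat n * Hmat n = Hmat n := by
  rcases n.eq_zero_or_pos with rfl | hn
  · exact Subsingleton.elim _ _
  have hJ : (of fun _ _ => (1 : ℝ) : Matrix (Fin n) (Fin n) ℝ) * of (fun _ _ => 1) =
      (n : ℝ) • of fun _ _ => 1 := by
    ext a b
    simp [mul_apply]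
  simp only [Hmat, Matrix.sub_mul, Matrix.mul_sub, Matrix.one_mul, Matrix.mul_one,
    Matrix.smul_mul, Matrix.mul_smul, hJ, smul_smul, inv_mul_cancel₀ (by positivity : (n : ℝ) ≠ 0),
    one_smul]
  simp

lemma Hmat_mulVec_one (n : ℕ) : Hmat n *ᵥ (fun _ => (1 : ℝ)) = 0 := by
  rcases n.eq_zero_or_pos with rfl | hn
  · exact Subsingleton.elim _ _
  funext a
  simp [Hmat, mulVec, one_apply, dotProduct, mul_inv_cancel₀ (by positivity : (n : ℝ) ≠ 0)]

lemma centeredSym_Hmat_conj {n : ℕ} {A : Matrix (Fin n) (Fin n) ℝ} (hA : Aᵀ = A) :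
    centeredSym (Hmat n * A * Hmat n) := by
  refine ⟨?_, ?_⟩
  · rw [IsSymm, transpose_mul, transpose_mul, Hmat_transpose, hA, Matrix.mul_assoc]
  · rw [← mulVec_mulVec, Hmat_mulVec_one, mulVec_zero]

lemma tripletMask_transpose {n : ℕ} (i j k : Fin n) : (tripletMask i j k)ᵀ = tripletMask i j k := by
  ext a b
  simp only [transpose_apply, tripletMask, of_apply, and_comm, or_comm]

lemma finner_tripletMask_self_le {n : ℕ} (i j k : Fin n) :
    finner (tripletMask i j k) (tripletMask i j k) ≤ 6 := by
  have hentry : ∀ a b, tripletMask i j k a b * tripletMask i j k a b ≤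
      (if a = j ∧ b = j then 1 else 0) + (if a = k ∧ b = k then 1 else 0)
      + (if a = i ∧ b = j then 1 else 0) + (if a = j ∧ b = i then 1 else 0)
      + (if a = i ∧ b = k then 1 else 0) + (if a = k ∧ b = i then 1 else 0) := by
    intro a b
    simp only [tripletMask, of_apply]
    split_ifs <;> norm_num <;> simp_all
  have hcount : ∀ p q : Fin n, ∑ a, ∑ b, (if a = p ∧ b = q then (1 : ℝ) else 0) = 1 := by
    simp [ite_and]
  calc finner (tripletMask i j k) (tripletMask i j k)
      ≤ ∑ a, ∑ b, ((if a = j ∧ b = j then 1 else 0) + (if a = k ∧ b = k then 1 else 0)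
          + (if a = i ∧ b = j then 1 else 0) + (if a = j ∧ b = i then 1 else 0)
          + (if a = i ∧ b = k then 1 else 0) + (if a = k ∧ b = i then (1 : ℝ) else 0)) := by
        rw [finner_eq_sum]
        exact Finset.sum_le_sum fun a _ => Finset.sum_le_sum fun b _ => hentry a b
    _ = 6 := by
        simp only [Finset.sum_add_distrib, hcount]
        norm_num

lemma sqrt_one_sub_sq_div_mul_le {D ρ x : ℝ} (hρ : ρ ^ 2 ≤ 1) (hx0 : 0 ≤ x) (hx : x ≤ 6) :
    √((1 - ρ ^ 2) / D * x) ≤ √(12 / D * (1 - ρ)) := by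
  rcases le_or_gt D 0 with hD | hD
  · rw [Real.sqrt_eq_zero_of_nonpos]
    · exact Real.sqrt_nonneg _
    · exact mul_nonpos_of_nonpos_of_nonneg (div_nonpos_of_nonneg_of_nonpos (by linarith) hD) hx0
  · apply Real.sqrt_le_sqrt
    rw [div_mul_eq_mul_div, div_mul_eq_mul_div]
    gcongr ?_ / _
    -- `12 (1 - ρ) - 6 (1 - ρ²) = 6 (1 - ρ)²`
    nlinarith [mul_le_mul_of_nonneg_left hx (sub_nonneg.2 hρ), sq_nonneg (1 - ρ)]

lemma Phi_le_gaussianReal {v : NNReal} {a c : ℝ} (hc : 0 < c) (ha : a * √v ≤ c) :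
    Phi a ≤ (gaussianReal 0 v {y | 0 < c + y}).toReal := by
  have hlaw : (gaussianReal 0 1).map (fun z => -√v * z) = gaussianReal 0 v := by
    rw [gaussianReal_map_const_mul]
    congr 1
    · simp
    · ext; simp
  -- strict `z < a` (harmless, `Φ` has no atoms) keeps this valid when `v = 0`
  have hsub : Set.Iio a ⊆ (fun z => -√v * z) ⁻¹' {y | 0 < c + y} := by
    intro z (hz : z < a)
    show 0 < c + -√v * z
    rcases (Real.sqrt_nonneg v).eq_or_lt with hv | hv
    · rw [← hv]; linarith
    · nlinarith
  have := nullSingletonClass_gaussianReal (μ := 0) one_ne_zero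
  rw [Phi, ← measure_congr Iio_ae_eq_Iic, ← hlaw,
    Measure.map_apply (by fun_prop) (measurableSet_lt measurable_const (by fun_prop))]
  exact ENNReal.toReal_mono (measure_ne_top _ _) (measure_mono hsub)

lemma IsIsoGaussianOn.Phi_le_measure {n : ℕ} {Ω : Type*} [MeasurableSpace Ω] {P : Measure Ω}
    {E : Ω → Matrix (Fin n) (Fin n) ℝ} {W : Matrix (Fin n) (Fin n) ℝ → Prop} {σ2 : ℝ}
    (hE : IsIsoGaussianOn P E W σ2) {T : Matrix (Fin n) (Fin n) ℝ} (hT : W T) {c τ : ℝ}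
    (hc : 0 < c) (hτ : √(σ2 * fnorm T ^ 2) ≤ τ) :
    Phi (c / τ) ≤ (P {ω | 0 < c + finner T (E ω)}).toReal := by
  have hlaw := hE.2 T hT
  have hmeas : AEMeasurable (fun ω => finner T (E ω)) P :=
    aemeasurable_of_map_neZero (by rw [hlaw]; infer_instance)
  have hsd : √(Real.toNNReal (σ2 * fnorm T ^ 2) : ℝ) ≤ τ := by
    rcases le_total (σ2 * fnorm T ^ 2) 0 with hv | hv
    · rw [Real.toNNReal_of_nonpos hv, NNReal.coe_zero, Real.sqrt_zero]
      exact (Real.sqrt_nonneg _).trans hτ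
    · rwa [Real.coe_toNNReal _ hv]
  change Phi (c / τ) ≤ (P ((fun ω => finner T (E ω)) ⁻¹' {y | 0 < c + y})).toReal
  rw [← Measure.map_apply_of_aemeasurable hmeas
    (measurableSet_lt measurable_const (by fun_prop)), hlaw]
  refine Phi_le_gaussianReal hc ?_
  rw [div_mul_eq_mul_div, mul_div_assoc]
  exact mul_le_of_le_one_right hc.le (div_le_one_of_le₀ hsd ((Real.sqrt_nonneg _).trans hsd))

theorem stmt3_general {n : ℕ} (N : ℕ)
    {Ω : Type*} [MeasurableSpace Ω] (P : Measure Ω)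
    (Khat : Matrix (Fin n) (Fin n) ℝ) (hKc : centeredSym Khat) (hKnorm : fnorm Khat = 1)
    (ρ : ℝ) (hρ : ρ ∈ Set.Ioo (0 : ℝ) 1)
    (i j k : Fin n)
    (Tc : Matrix (Fin n) (Fin n) ℝ) (hTc : Tc = Hmat n * tripletMask i j k * Hmat n)
    (hΔ : 0 < finner Tc Khat)
    (E : Ω → Matrix (Fin n) (Fin n) ℝ)
    (hE : IsIsoGaussianOn P E
      (fun M => centeredSym M ∧ finner Khat M = 0) ((1 - ρ ^ 2) / ((N : ℝ) - 1)))
    (Lhat : Ω → Matrix (Fin n) (Fin n) ℝ) (hL : ∀ ω, Lhat ω = ρ • Khat + E ω) :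
    (P {ω | 0 < finner Tc (Lhat ω)}).toReal
      ≥ Phi (ρ * finner Tc Khat / Real.sqrt ((12 / ((N : ℝ) - 1)) * (1 - ρ))) := by
  set Δ := finner Tc Khat
  set Tp := Tc - Δ • Khat
  have hKK : finner Khat Khat = 1 := (Real.sqrt_eq_one).1 hKnorm
  have hTcc : centeredSym Tc := hTc ▸ centeredSym_Hmat_conj (tripletMask_transpose i j k)
  have hTpW : centeredSym Tp ∧ finner Khat Tp = 0 :=
    ⟨hTcc.sub (hKc.smul Δ), finner_sub_proj_eq_zero hKK Tc⟩
  have hTp6 : finner Tp Tp ≤ 6 := calc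
    finner Tp Tp ≤ finner Tc Tc := finner_sub_proj_self_le hKK Tc
    _ ≤ finner (tripletMask i j k) (tripletMask i j k) :=
      hTc ▸ finner_conj_self_le (Hmat_transpose n) (Hmat_mul_self n) _
    _ ≤ 6 := finner_tripletMask_self_le i j k
  have hsplit : ∀ ω, finner Tc (Lhat ω) = ρ * Δ + finner Tp (E ω) := fun ω => by
    rw [hL, finner_add_right, finner_smul_right, finner_sub_left, finner_smul_left,
      (hE.1 ω).2]
    ring
  simp only [hsplit]
  refine hE.Phi_le_measure hTpW (mul_pos hρ.1 hΔ) ?_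
  rw [fnorm_sq]
  exact sqrt_one_sub_sq_div_mul_le (by nlinarith [hρ.1, hρ.2]) (finner_self_nonneg Tp) hTp6

/-- universal lower bound, squared-Euclidean triplet mask. -/
theorem stmt3 {n : ℕ} (hn : 2 ≤ n) (N : ℕ) (hN : N = n * (n - 1) / 2)
    {Ω : Type*} [MeasurableSpace Ω] (P : Measure Ω) [IsProbabilityMeasure P]
    (Khat : Matrix (Fin n) (Fin n) ℝ) (hKc : centeredSym Khat) (hKnorm : fnorm Khat = 1)
    (ρ : ℝ) (hρ : ρ ∈ Set.Ioo (0 : ℝ) 1)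
    (i j k : Fin n) (hij : i ≠ j) (hik : i ≠ k) (hjk : j ≠ k)
    (Tc : Matrix (Fin n) (Fin n) ℝ) (hTc : Tc = Hmat n * tripletMask i j k * Hmat n)
    (hΔ : 0 < finner Tc Khat)
    (E : Ω → Matrix (Fin n) (Fin n) ℝ)
    (hE : IsIsoGaussianOn P E
      (fun M => centeredSym M ∧ finner Khat M = 0) ((1 - ρ ^ 2) / ((N : ℝ) - 1)))
    (Lhat : Ω → Matrix (Fin n) (Fin n) ℝ) (hL : ∀ ω, Lhat ω = ρ • Khat + E ω) :
    (P {ω | 0 < finner Tc (Lhat ω)}).toReal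
      ≥ Phi (ρ * finner Tc Khat / Real.sqrt ((12 / ((N : ℝ) - 1)) * (1 - ρ))) :=
  stmt3_general N P Khat hKc hKnorm ρ hρ i j k Tc hTc hΔ E hE Lhat hL
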